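/- For every integer s ≥ 2, ζ_E(2s) = ((-1)^s π^{2s} / (2s-1)) · ( 1/(2s+1)! − (1/s) ∑_{k=1}^{s-1} (-1)^k ζ_E(2k)/π^{2k} · (2k-1)(2s-k)/(2s-2k+1)! ), where ζ_E is the Euler zeta function. -/

import Mathlib

/-!
Write `c k = (2 - 2 ^ (2k)) B_{2k} / (2k)!` for the Taylor coefficients of `x / sinh x`.
Evaluating the Fourier series of `B_{2k}` at `x = 1/2`, where `cos (π n) = (-1) ^ n`, gives
`ζ_E(2k) = (-1) ^ k π ^ (2k) c k / 2`. Since `B_{2m+1}(1/2) = B_{2m+1}(1) = 0`, the expansion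
`2 ^ n B_n(1/2) - 2 B_n(1) = ∑ binom(n, i) (2 ^ i - 2) B_i` at `n = 2m + 1` yields
`∑_{k ≤ m} c k / (2(m - k) + 1)! = 0` for `m ≥ 1` (the identity `(x / sinh x) (sinh x / x) = 1`).
Splitting the weight as `(2k - 1)(2s - k) = s(2s - 1) - (s - k)(2(s - k) + 1)` reduces the
weighted sum `∑_{k ≤ s} c k (2k - 1)(2s - k) / (2(s - k) + 1)!` to the cases `m = s` and
`m = s - 1`, so it vanishes; isolating its terms `k = 0` and `k = s` is the recurrence.
-/

open Real

noncomputable def eulerZeta (s : ℕ) : ℝ := ∑' n : ℕ, (-1 : ℝ) ^ ((n + 1) - 1) / (n + 1 : ℝ) ^ s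

open Finset Nat

theorem bernoulliFun_eq_sum (n : ℕ) (x : ℝ) :
    bernoulliFun n x = ∑ i ∈ range (n + 1), (n.choose i : ℝ) * bernoulli i * x ^ (n - i) := by
  simp [bernoulliFun, Polynomial.bernoulli, mul_comm]

theorem sum_choose_mul_two_pow_sub_two_mul_bernoulli {n : ℕ} (hn : Odd n) (h1 : n ≠ 1) :
    ∑ i ∈ range (n + 1), (n.choose i : ℝ) * (2 ^ i - 2) * bernoulli i = 0 := by
  obtain ⟨k, rfl⟩ := hn
  have one : bernoulliFun (2 * k + 1) 1 = 0 := by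
    rw [bernoulliFun_eval_one, if_neg h1, bernoulliFun_eval_zero,
      bernoulli_eq_zero_of_odd ⟨k, rfl⟩ (by omega), Rat.cast_zero, add_zero]
  calc _ = 2 ^ (2 * k + 1) * bernoulliFun (2 * k + 1) 2⁻¹ - 2 * bernoulliFun (2 * k + 1) 1 := by
        rw [bernoulliFun_eq_sum, bernoulliFun_eq_sum, mul_sum, mul_sum, ← sum_sub_distrib]
        refine sum_congr rfl fun i hi => ?_
        have hi : i ≤ 2 * k + 1 := Nat.lt_succ_iff.mp (mem_range.mp hi)
        rw [inv_pow, one_pow, mul_one, ← Nat.sub_add_cancel hi, pow_add, Nat.add_sub_cancel]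
        field_simp
    _ = 0 := by rw [bernoulliFun_eval_half_eq_zero, one]; ring

theorem Finset.sum_range_two_mul {M : Type*} [AddCommMonoid M] (f : ℕ → M) (n : ℕ) :
    ∑ i ∈ range (2 * n), f i = ∑ i ∈ range n, (f (2 * i) + f (2 * i + 1)) := by
  induction n with
  | zero => simp
  | succ n ih => rw [mul_add_one, sum_range_succ, sum_range_succ, sum_range_succ, ih, add_assoc]

noncomputable def xDivSinhCoeff (k : ℕ) : ℝ := (2 - 2 ^ (2 * k)) * bernoulli (2 * k) / (2 * k)!

theorem xDivSinhCoeff_zero : xDivSinhCoeff 0 = 1 := by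
  norm_num [xDivSinhCoeff]

theorem sum_xDivSinhCoeff_div_factorial {m : ℕ} (hm : m ≠ 0) :
    ∑ k ∈ range (m + 1), xDivSinhCoeff k / (2 * (m - k) + 1)! = 0 := by
  have h := sum_choose_mul_two_pow_sub_two_mul_bernoulli (n := 2 * m + 1) ⟨m, rfl⟩ (by omega)
  rw [show 2 * m + 1 + 1 = 2 * (m + 1) by ring, sum_range_two_mul] at h
  have hfac : ((2 * m + 1)! : ℝ) ≠ 0 := by positivity
  rw [← mul_right_inj' (neg_ne_zero.mpr hfac), mul_zero, ← h, mul_sum]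
  refine sum_congr rfl fun k hk => ?_
  have hk : k ≤ m := Nat.lt_succ_iff.mp (mem_range.mp hk)
  have hodd : ((2 * m + 1).choose (2 * k + 1) : ℝ) * (2 ^ (2 * k + 1) - 2) *
      bernoulli (2 * k + 1) = 0 := by
    rcases k.eq_zero_or_pos with rfl | hk0
    · norm_num
    · rw [bernoulli_eq_zero_of_odd ⟨k, rfl⟩ (by omega), Rat.cast_zero, mul_zero]
  rw [hodd, add_zero, Nat.cast_choose ℝ (by omega : 2 * k ≤ 2 * m + 1),
    show 2 * m + 1 - 2 * k = 2 * (m - k) + 1 by omega, xDivSinhCoeff]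
  field_simp
  ring

theorem sum_xDivSinhCoeff_mul_div_factorial {s : ℕ} (hs : 2 ≤ s) :
    ∑ k ∈ range (s + 1),
      xDivSinhCoeff k * ((2 * k - 1) * (2 * s - k)) / (2 * (s - k) + 1)! = 0 := by
  have h_s := sum_xDivSinhCoeff_div_factorial (m := s) (by omega)
  have h_pred := sum_xDivSinhCoeff_div_factorial (m := s - 1) (by omega)
  rw [sum_range_succ, Nat.sub_self, mul_zero, zero_add, factorial_one, Nat.cast_one, div_one] at h_s
  rw [Nat.sub_add_cancel (by omega : 1 ≤ s)] at h_pred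
  have hterm : ∀ k ∈ range s,
      xDivSinhCoeff k * ((2 * k - 1) * (2 * s - k)) / (2 * (s - k) + 1)! =
      s * (2 * s - 1) * (xDivSinhCoeff k / (2 * (s - k) + 1)!) -
        xDivSinhCoeff k / (2 * (s - 1 - k) + 1)! / 2 := by
    intro k hk
    obtain ⟨j, rfl⟩ : ∃ j, s = k + j + 1 := ⟨s - k - 1, by have := mem_range.mp hk; omega⟩
    rw [show k + j + 1 - k = j + 1 by omega, show k + j + 1 - 1 - k = j by omega,
      show 2 * (j + 1) + 1 = (2 * j + 1) + 1 + 1 by ring, factorial_succ, factorial_succ]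
    push_cast
    field_simp
    ring
  rw [sum_range_succ, sum_congr rfl hterm, sum_sub_distrib, ← mul_sum, ← sum_div, h_pred,
    eq_neg_of_add_eq_zero_left h_s, Nat.sub_self, mul_zero, zero_add, factorial_one, Nat.cast_one,
    div_one]
  ring

theorem eulerZeta_two_mul {k : ℕ} (hk : k ≠ 0) :
    eulerZeta (2 * k) = (-1) ^ k * π ^ (2 * k) / 2 * xDivSinhCoeff k := by
  have h := hasSum_one_div_nat_pow_mul_cos hk (x := 2⁻¹) ⟨by norm_num, by norm_num⟩
  rw [← bernoulliFun, bernoulliFun_eval_half, ← hasSum_nat_add_iff' 1] at h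
  calc eulerZeta (2 * k)
      = ∑' n : ℕ, -(1 / ((n + 1 : ℕ) : ℝ) ^ (2 * k) * cos (2 * π * (n + 1 : ℕ) * 2⁻¹)) := by
        refine tsum_congr fun n => ?_
        rw [show 2 * π * (n + 1 : ℕ) * 2⁻¹ = (n + 1 : ℕ) * π by ring, cos_nat_mul_pi]
        simp only [add_tsub_cancel_right, pow_succ, Nat.cast_add, Nat.cast_one]
        ring
    _ = _ := h.neg.tsum_eq
    _ = (-1) ^ k * π ^ (2 * k) / 2 * xDivSinhCoeff k := by
        have h2k : (2 : ℝ) ^ (2 * k) ≠ 0 := by positivity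
        simp only [xDivSinhCoeff, range_one, sum_singleton, CharP.cast_eq_zero, mul_zero, zero_mul,
          cos_zero, zero_pow (mul_ne_zero two_ne_zero hk), div_zero, sub_zero, pow_succ, mul_pow]
        field_simp

theorem recurrence_corollary (s : ℕ) (hs : 2 ≤ s) :
    eulerZeta (2 * s) =
      (-1 : ℝ) ^ s * π ^ (2 * s) / (2 * (s : ℝ) - 1) *
        (1 / ((Nat.factorial (2 * s + 1)) : ℝ) -
          (1 / (s : ℝ)) *
            ∑ k ∈ Finset.Icc 1 (s - 1),
              (-1 : ℝ) ^ k * eulerZeta (2 * k) / π ^ (2 * k) *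
                ((2 * (k : ℝ) - 1) * (2 * (s : ℝ) - (k : ℝ)) / ((Nat.factorial (2 * s - 2 * k + 1)) : ℝ))) := by
  have hterm : ∀ k ∈ Icc 1 (s - 1), (-1 : ℝ) ^ k * eulerZeta (2 * k) / π ^ (2 * k) *
      ((2 * (k : ℝ) - 1) * (2 * (s : ℝ) - (k : ℝ)) / ((2 * s - 2 * k + 1)! : ℝ)) =
      xDivSinhCoeff k * ((2 * k - 1) * (2 * s - k)) / (2 * (s - k) + 1)! / 2 := by
    intro k hk
    obtain ⟨hk1, hks⟩ := mem_Icc.mp hk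
    rw [eulerZeta_two_mul (by omega), show 2 * s - 2 * k + 1 = 2 * (s - k) + 1 by omega]
    field_simp
    rw [← pow_mul', pow_mul, neg_one_sq, one_pow, one_mul]
  have hsum := sum_xDivSinhCoeff_mul_div_factorial hs
  rw [sum_range_succ, sum_range_eq_add_Ico _ (by omega)] at hsum
  rw [sum_congr rfl hterm, ← sum_div, ← Ico_add_one_right_eq_Icc, Nat.sub_add_cancel (by omega),
    eulerZeta_two_mul (by omega)]
  simp only [xDivSinhCoeff_zero, Nat.sub_self, Nat.sub_zero, CharP.cast_eq_zero, mul_zero, zero_add,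
    factorial_one, Nat.cast_one, div_one] at hsum
  have h2s : 2 * (s : ℝ) - 1 ≠ 0 := by
    have : (2 : ℝ) ≤ s := by exact_mod_cast hs
    linarith
  field_simp at hsum ⊢
  linear_combination hsum
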